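/- arXiv:0911.5078 — 4 statements merged into one kernel-verified Lean document; each statement's English description precedes it below -/
import Mathlib

section
/- Let L be a 2×2 matrix with rational entries and determinant 1, let r and s be non-zero integers, and let u and v be integer vectors in ℤ² each with coprime entries. If L·(r·u) = s·v, then d(L) ≥ |s/r| ≥ 1/d(L), where d(L) is the least positive integer d such that d·L has all integer entries. -/
/-- `d` is the denominator of `L ∈ SL₂(ℚ)`: the least integer `d ≥ 1` such that
all entries of `d • L` are integers. -/
def IsDenom (L : Matrix (Fin 2) (Fin 2) ℚ) (d : ℕ) : Prop :=
  1 ≤ d ∧ (∀ i j, ∃ z : ℤ, (d : ℚ) * L i j = (z : ℚ)) ∧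
    ∀ d' : ℕ, 1 ≤ d' → (∀ i j, ∃ z : ℤ, (d' : ℚ) * L i j = (z : ℚ)) → d ≤ d'

/-!
Clear the denominator: with `M = d • L` integral, `L (r u) = s v` becomes `r • (M u) = (d s) • v`,
so `r` divides `d s v₀` and `d s v₁`, hence `d s` because `v` is primitive; thus `|r| ≤ d |s|`.
Since `det L = 1`, the inverse `L⁻¹ = adj L` has the same denominator and maps `s v` to `r u`,
so the same argument gives `|s| ≤ d |r|`.
-/

open Matrix

theorem IsCoprime.dvd_of_dvd_mul_of_dvd_mul {R : Type*} [CommSemiring R] {a b r t : R}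
    (hab : IsCoprime a b) (ha : r ∣ t * a) (hb : r ∣ t * b) : r ∣ t := by
  obtain ⟨x, y, hxy⟩ := hab
  have ht : t = x * (t * a) + y * (t * b) := by
    calc t = t * (x * a + y * b) := by rw [hxy, mul_one]
      _ = x * (t * a) + y * (t * b) := by ring
  rw [ht]
  exact dvd_add (dvd_mul_of_dvd_right ha x) (dvd_mul_of_dvd_right hb y)

theorem Matrix.dvd_mul_of_mulVec_eq {n : Type*} [Fintype n] {L : Matrix n n ℚ} {d : ℕ}
    (hint : ∀ i j, ∃ z : ℤ, (d : ℚ) * L i j = z) {r s : ℤ} {u v : n → ℤ}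
    (h : L *ᵥ ((r : ℚ) • fun i => (u i : ℚ)) = (s : ℚ) • fun i => (v i : ℚ)) (i : n) :
    r ∣ d * s * v i := by
  choose M hM using hint
  refine ⟨∑ j, M i j * u j, ?_⟩
  have hi := congrFun h i
  simp only [mulVec, dotProduct, Pi.smul_apply, smul_eq_mul] at hi
  have hQ : (d : ℚ) * s * v i = r * ∑ j, (M i j : ℚ) * u j := by
    rw [mul_assoc, ← hi, Finset.mul_sum, Finset.mul_sum]
    refine Finset.sum_congr rfl fun j _ => ?_
    rw [← hM]
    ring
  exact_mod_cast hQ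

theorem Matrix.natAbs_le_mul_natAbs_of_mulVec_eq {L : Matrix (Fin 2) (Fin 2) ℚ} {d : ℕ}
    (hd : 1 ≤ d) (hint : ∀ i j, ∃ z : ℤ, (d : ℚ) * L i j = z) {r s : ℤ} (hs : s ≠ 0)
    {u v : Fin 2 → ℤ} (hv : IsCoprime (v 0) (v 1))
    (h : L *ᵥ ((r : ℚ) • fun i => (u i : ℚ)) = (s : ℚ) • fun i => (v i : ℚ)) :
    r.natAbs ≤ d * s.natAbs := by
  have hdvd : r ∣ d * s :=
    hv.dvd_of_dvd_mul_of_dvd_mul (dvd_mul_of_mulVec_eq hint h 0) (dvd_mul_of_mulVec_eq hint h 1)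
  have hds : (d : ℤ) * s ≠ 0 := mul_ne_zero (by omega) hs
  simpa [Int.natAbs_mul] using Int.natAbs_le_of_dvd_ne_zero hdvd hds

theorem Matrix.exists_int_mul_adjugate_fin_two {L : Matrix (Fin 2) (Fin 2) ℚ} {d : ℕ}
    (hint : ∀ i j, ∃ z : ℤ, (d : ℚ) * L i j = z) :
    ∀ i j, ∃ z : ℤ, (d : ℚ) * L.adjugate i j = z := by
  have hneg : ∀ i j, ∃ z : ℤ, (d : ℚ) * -L i j = z := fun i j =>
    let ⟨z, hz⟩ := hint i j
    ⟨-z, by rw [mul_neg, hz, Int.cast_neg]⟩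
  intro i j
  rw [adjugate_fin_two]
  fin_cases i <;> fin_cases j
  exacts [hint 1 1, hneg 0 1, hneg 1 0, hint 0 0]

theorem Matrix.adjugate_mulVec_of_mulVec_eq {n : Type*} [Fintype n] [DecidableEq n]
    {R : Type*} [CommRing R] {L : Matrix n n R} (hL : L.det = 1) {x y : n → R}
    (h : L *ᵥ x = y) : L.adjugate *ᵥ y = x := by
  rw [← h, mulVec_mulVec, adjugate_mul, hL, one_smul, one_mulVec]

theorem stmt0 (L : Matrix (Fin 2) (Fin 2) ℚ) (hL : L.det = 1)
    (d : ℕ) (hd : IsDenom L d)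
    (r s : ℤ) (hr : r ≠ 0) (hs : s ≠ 0)
    (u v : Fin 2 → ℤ) (hu : IsCoprime (u 0) (u 1)) (hv : IsCoprime (v 0) (v 1))
    (h : L.mulVec ((r : ℚ) • fun i => (u i : ℚ)) = (s : ℚ) • fun i => (v i : ℚ)) :
    (1 : ℚ) / (d : ℚ) ≤ |(s : ℚ) / (r : ℚ)| ∧ |(s : ℚ) / (r : ℚ)| ≤ (d : ℚ) := by
  obtain ⟨hd1, hint, -⟩ := hd
  have hrs := natAbs_le_mul_natAbs_of_mulVec_eq hd1 hint hs hv h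
  have hsr := natAbs_le_mul_natAbs_of_mulVec_eq hd1 (exists_int_mul_adjugate_fin_two hint) hr hu
    (adjugate_mulVec_of_mulVec_eq hL h)
  have hrQ : |(r : ℚ)| ≤ d * |(s : ℚ)| := by
    simpa [Nat.cast_natAbs] using (by exact_mod_cast hrs : (r.natAbs : ℚ) ≤ d * s.natAbs)
  have hsQ : |(s : ℚ)| ≤ d * |(r : ℚ)| := by
    simpa [Nat.cast_natAbs] using (by exact_mod_cast hsr : (s.natAbs : ℚ) ≤ d * r.natAbs)
  have hr0 : 0 < |(r : ℚ)| := abs_pos.mpr (Int.cast_ne_zero.mpr hr)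
  have hd0 : (0 : ℚ) < d := by exact_mod_cast hd1
  rw [abs_div]
  constructor
  · rw [div_le_div_iff₀ hd0 hr0]
    linarith
  · rwa [div_le_iff₀ hr0]
end

section
/- Let L be a 2×2 matrix with rational entries and determinant 1, and let d(L) be its denominator. If |trace(L)| < 2/d(L) or |trace(L)| > 2·d(L), then L has no rational eigenslopes; that is, there is no nonzero vector (v₀, v₁) with v₀, v₁ ∈ ℚ (not both zero) that is an eigenvector of L. -/
open Matrix

theorem Matrix.sq_sub_trace_mul_add_det_eq_zero_of_mulVec_eq_smul {R : Type*} [CommRing R]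
    [IsDomain R] (L : Matrix (Fin 2) (Fin 2) R) {v : Fin 2 → R} {q : R} (hv : v ≠ 0)
    (h : L *ᵥ v = q • v) : q ^ 2 - L.trace * q + L.det = 0 := by
  have hker : (L - q • 1) *ᵥ v = 0 := by
    rw [sub_mulVec, smul_mulVec, one_mulVec, h, sub_self]
  have hdet : (L - q • 1).det = 0 := exists_mulVec_eq_zero_iff.mp ⟨v, hv, hker⟩
  rw [det_fin_two] at hdet
  simp only [sub_apply, smul_apply, one_apply_eq, one_apply_ne zero_ne_one,
    one_apply_ne one_ne_zero, smul_eq_mul] at hdet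
  rw [trace_fin_two, det_fin_two]
  linear_combination hdet

theorem Rat.exists_int_eq_of_sq_eq {s : ℚ} {a b : ℤ} (h : s ^ 2 = a * s + b) :
    ∃ z : ℤ, s = z := by
  have hnum : (s.num : ℚ) = s * s.den := (Rat.mul_den_eq_num s).symm
  have hZ : s.num ^ 2 = s.den * (a * s.num + b * s.den) := by
    have : (s.num : ℚ) ^ 2 = s.den * (a * s.num + b * s.den) := by
      rw [hnum]; linear_combination (s.den : ℚ) ^ 2 * h
    exact_mod_cast this
  have hdvd : s.den ∣ s.num.natAbs ^ 2 := by
    rw [← Int.natAbs_pow, ← Int.natCast_dvd, hZ]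
    exact dvd_mul_right _ _
  have hden : s.den = 1 := Nat.Coprime.eq_one_of_dvd (s.reduced.symm.pow_right 2) hdvd
  exact ⟨s.num, (Rat.den_eq_one_iff s).mp hden |>.symm⟩

theorem two_mul_le_abs_add_of_mul_eq_sq {R : Type*} [CommRing R] [LinearOrder R]
    [IsStrictOrderedRing R] {a b c : R} (h : a * b = c ^ 2) (hc : 0 ≤ c) : 2 * c ≤ |a + b| := by
  have hsq : (2 * c) ^ 2 ≤ (a + b) ^ 2 := by nlinarith [sq_nonneg (a - b)]
  simpa [abs_of_nonneg (by positivity : (0 : R) ≤ 2 * c)] using sq_le_sq.mp hsq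

theorem Int.abs_add_le_mul_add_one {a b : ℤ} (h : 0 < a * b) : |a + b| ≤ a * b + 1 := by
  rcases pos_and_pos_or_neg_and_neg_of_mul_pos h with ⟨ha, hb⟩ | ⟨ha, hb⟩
  · rw [abs_of_pos (by omega)]; nlinarith
  · rw [abs_of_neg (by omega)]; nlinarith

theorem Int.abs_mem_Icc_of_sq_sub_mul_add_sq_eq_zero {a t n : ℤ} (hn : 0 < n)
    (h : a ^ 2 - t * a + n ^ 2 = 0) : |t| ∈ Set.Icc (2 * n) (n ^ 2 + 1) := by
  have hprod : a * (t - a) = n ^ 2 := by linear_combination -h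
  have hsum : a + (t - a) = t := by ring
  refine ⟨hsum ▸ two_mul_le_abs_add_of_mul_eq_sq hprod hn.le, ?_⟩
  rw [← hsum, ← hprod]
  exact Int.abs_add_le_mul_add_one (by rw [hprod]; positivity)

theorem Matrix.abs_trace_mem_Icc_of_mulVec_eq_smul (L : Matrix (Fin 2) (Fin 2) ℚ)
    (hL : L.det = 1) {d : ℕ} (hd : 1 ≤ d) (hint : ∀ i j, ∃ z : ℤ, (d : ℚ) * L i j = z)
    {v : Fin 2 → ℚ} {q : ℚ} (hv : v ≠ 0) (h : L *ᵥ v = q • v) :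
    |L.trace| ∈ Set.Icc (2 / (d : ℚ)) (2 * d) := by
  have hchar := L.sq_sub_trace_mul_add_det_eq_zero_of_mulVec_eq_smul hv h
  rw [hL] at hchar
  obtain ⟨t, ht⟩ : ∃ t : ℤ, (d : ℚ) * L.trace = t := by
    obtain ⟨z₀, hz₀⟩ := hint 0 0
    obtain ⟨z₁, hz₁⟩ := hint 1 1
    exact ⟨z₀ + z₁, by rw [trace_fin_two]; push_cast; linear_combination hz₀ + hz₁⟩
  obtain ⟨a, ha⟩ : ∃ a : ℤ, (d : ℚ) * q = a :=
    Rat.exists_int_eq_of_sq_eq (a := t) (b := -(d : ℤ) ^ 2) (by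
      push_cast; linear_combination (d : ℚ) ^ 2 * hchar + (d : ℚ) * q * ht)
  have hpoly : a ^ 2 - t * a + (d : ℤ) ^ 2 = 0 := by
    have : (a : ℚ) ^ 2 - t * a + (d : ℚ) ^ 2 = 0 := by
      rw [← ha, ← ht]; linear_combination (d : ℚ) ^ 2 * hchar
    exact_mod_cast this
  obtain ⟨hlow, hhigh⟩ := Int.abs_mem_Icc_of_sq_sub_mul_add_sq_eq_zero (by omega) hpoly
  have hdQ : (1 : ℚ) ≤ d := by exact_mod_cast hd
  have habs : (d : ℚ) * |L.trace| = |(t : ℚ)| := by rw [← ht, abs_mul, Nat.abs_cast]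
  have hlowQ : 2 * (d : ℚ) ≤ d * |L.trace| := by rw [habs]; exact_mod_cast hlow
  have hhighQ : (d : ℚ) * |L.trace| ≤ d ^ 2 + 1 := by rw [habs]; exact_mod_cast hhigh
  constructor
  · rw [div_le_iff₀ (by linarith)]; linarith
  · nlinarith

/-- If `|trace L| < 2/d(L)` or `|trace L| > 2·d(L)`, then `L` has no rational
eigenslope, i.e. no nonzero rational eigenvector. -/
theorem stmt1 (L : Matrix (Fin 2) (Fin 2) ℚ) (hL : L.det = 1)
    (d : ℕ) (hd : IsDenom L d)
    (h : |L.trace| < 2 / (d : ℚ) ∨ |L.trace| > 2 * (d : ℚ)) :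
    ¬ ∃ (v : Fin 2 → ℚ) (q : ℚ), v ≠ 0 ∧ L.mulVec v = q • v := by
  rintro ⟨v, q, hv, heq⟩
  obtain ⟨hd₁, hint, -⟩ := hd
  obtain ⟨hlow, hhigh⟩ := L.abs_trace_mem_Icc_of_mulVec_eq_smul hL hd₁ hint hv heq
  rcases h with h | h <;> linarith
end

section
/- Let L ∈ SL₂(ℚ) have a rational eigenslope. Then the corresponding eigenvalue q is rational and satisfies 1/d(L) ≤ |q| ≤ d(L), where d(L) is the denominator of L. -/
open Matrix

theorem Matrix.exists_int_eq_mul_eigenvalue {n : Type*} [Fintype n] (L : Matrix n n ℚ) (d : ℚ)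
    (hL : ∀ i j, ∃ z : ℤ, d * L i j = z) (v w : n → ℤ) (hvw : ∑ i, w i * v i = 1) (q : ℚ)
    (h : L *ᵥ (fun i ↦ (v i : ℚ)) = q • fun i ↦ (v i : ℚ)) : ∃ k : ℤ, d * q = k := by
  choose z hz using hL
  refine ⟨∑ i, w i * ∑ j, z i j * v j, ?_⟩
  have hrow (i : n) : ∑ j, L i j * v j = q * v i := congrFun h i
  have hvwQ : ∑ i, (w i : ℚ) * v i = 1 := by exact_mod_cast hvw
  push_cast
  simp_rw [← hz, mul_assoc, ← Finset.mul_sum, hrow]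
  calc d * q = d * q * ∑ i, (w i : ℚ) * v i := by rw [hvwQ, mul_one]
    _ = _ := by rw [Finset.mul_sum]; ring_nf

theorem Matrix.exists_int_eq_mul_adjugate_fin_two_apply {L : Matrix (Fin 2) (Fin 2) ℚ} {d : ℚ}
    (hL : ∀ i j, ∃ z : ℤ, d * L i j = z) : ∀ i j, ∃ z : ℤ, d * L.adjugate i j = z := by
  have hneg (i j : Fin 2) : ∃ z : ℤ, d * -L i j = z := by
    obtain ⟨z, hz⟩ := hL i j
    exact ⟨-z, by rw [mul_neg, hz, Int.cast_neg]⟩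
  rw [adjugate_fin_two]
  intro i j
  fin_cases i <;> fin_cases j
  · exact hL 1 1
  · exact hneg 0 1
  · exact hneg 1 0
  · exact hL 0 0

theorem Matrix.adjugate_mulVec_eq_inv_smul {K n : Type*} [Field K] [Fintype n] [DecidableEq n]
    {L : Matrix n n K} (hL : L.det = 1) {v : n → K} (hv : v ≠ 0) {q : K} (h : L *ᵥ v = q • v) :
    q ≠ 0 ∧ L.adjugate *ᵥ v = q⁻¹ • v := by
  have hv' : q • L.adjugate *ᵥ v = v := by
    rw [← mulVec_smul, ← h, mulVec_mulVec, adjugate_mul, hL, one_smul, one_mulVec]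
  have hq : q ≠ 0 := by
    rintro rfl
    exact hv (by rw [← hv', zero_smul])
  refine ⟨hq, ?_⟩
  calc L.adjugate *ᵥ v = q⁻¹ • q • L.adjugate *ᵥ v := by
        rw [smul_smul, inv_mul_cancel₀ hq, one_smul]
    _ = q⁻¹ • v := by rw [hv']

theorem one_div_le_abs_and_abs_le_of_mul_eq_intCast {K : Type*} [Field K] [LinearOrder K]
    [IsStrictOrderedRing K] {d q : K} (hd : 0 < d) (hq : q ≠ 0) {k k' : ℤ} (hk : d * q = k)
    (hk' : d * q⁻¹ = k') :
    1 / d ≤ |q| ∧ |q| ≤ d := by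
  have one_le_abs (k : ℤ) (hk0 : (k : K) ≠ 0) : (1 : K) ≤ |(k : K)| := by
    rw [← Int.cast_abs]
    exact_mod_cast Int.one_le_abs (by exact_mod_cast hk0)
  have h1 : 1 ≤ d * |q| := by
    rw [← abs_of_pos hd, ← abs_mul, hk]
    exact one_le_abs k (by rw [← hk]; positivity)
  have h2 : 1 ≤ d * |q|⁻¹ := by
    rw [← abs_of_pos hd, ← abs_inv, ← abs_mul, hk']
    exact one_le_abs k' (by rw [← hk']; positivity)
  constructor
  · rwa [div_le_iff₀ hd, mul_comm]
  · rwa [← div_eq_mul_inv, le_div_iff₀ (abs_pos.mpr hq), one_mul] at h2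

/-- If `L ∈ SL₂(ℚ)` has a rational eigenslope, with eigenvector `(r, s)` for coprime
integers `r, s` and (rational) eigenvalue `q`, then `1/d(L) ≤ |q| ≤ d(L)`. -/
theorem stmt2 (L : Matrix (Fin 2) (Fin 2) ℚ) (hL : L.det = 1)
    (d : ℕ) (hd : IsDenom L d)
    (r s : ℤ) (hco : IsCoprime r s) (q : ℚ)
    (h : L.mulVec ![(r : ℚ), (s : ℚ)] = q • ![(r : ℚ), (s : ℚ)]) :
    (1 : ℚ) / (d : ℚ) ≤ |q| ∧ |q| ≤ (d : ℚ) := by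
  obtain ⟨hd1, hint, -⟩ := hd
  have hv : ![(r : ℚ), (s : ℚ)] ≠ 0 := by
    rcases hco.ne_zero_or_ne_zero with hr | hs
    · exact fun h0 ↦ hr (by simpa using congrFun h0 0)
    · exact fun h0 ↦ hs (by simpa using congrFun h0 1)
  obtain ⟨x, y, hxy⟩ := hco
  have hcast : (fun i ↦ ((![r, s] i : ℤ) : ℚ)) = ![(r : ℚ), (s : ℚ)] := by
    ext i; fin_cases i <;> rfl
  have hbezout : ∑ i, ![x, y] i * ![r, s] i = 1 := by simpa [Fin.sum_univ_two] using hxy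
  obtain ⟨hq, hadj⟩ := adjugate_mulVec_eq_inv_smul hL hv h
  obtain ⟨k, hk⟩ := exists_int_eq_mul_eigenvalue L d hint _ _ hbezout q (by rwa [hcast])
  obtain ⟨k', hk'⟩ := exists_int_eq_mul_eigenvalue L.adjugate d
    (exists_int_eq_mul_adjugate_fin_two_apply hint) _ _ hbezout q⁻¹ (by rwa [hcast])
  exact one_div_le_abs_and_abs_le_of_mul_eq_intCast (by exact_mod_cast hd1) hq hk hk'
end

section
/- Let J ∈ SL₂(ℤ) be hyperbolic (|trace(J)| > 2) and K ∈ SL₂(ℚ). Then there exists N such that for all n ≥ N, the matrix Jⁿ K has no eigenvector with rational entries. -/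
/-!
The trace `tₙ` of `Jⁿ K` satisfies `tₙ₊₂ = tr J · tₙ₊₁ - tₙ` by Cayley–Hamilton, and `D tₙ` is an
integer for a common denominator `D` of the entries of `K`. Because `|tr J| ≥ 3`, an integer
sequence with this recurrence either vanishes identically or its absolute value tends to infinity.
A rational eigenvalue `q` of `Jⁿ K ∈ SL₂(ℚ)` is a root of `x² - tₙ x + 1`, so `tₙ ≠ 0`, and
`q⁻¹` is a root as well; clearing denominators, the numerators of `q` and `q⁻¹` divide `D`,
whence `|tₙ| = |q + q⁻¹| ≤ 2|D|`.
-/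

open Matrix Filter Polynomial

lemma Matrix.exists_intCast_map_eq_smul {m n : Type*} [Finite m] [Finite n] (A : Matrix m n ℚ) :
    ∃ (D : ℤ) (B : Matrix m n ℤ), D ≠ 0 ∧ B.map (Int.cast : ℤ → ℚ) = (D : ℚ) • A := by
  obtain ⟨⟨D, hD⟩, hint⟩ :=
    IsLocalization.exist_integer_multiples_of_finite (nonZeroDivisors ℤ) fun p : m × n ↦ A p.1 p.2
  choose B hB using hint
  refine ⟨D, Matrix.of fun i j ↦ B (i, j), nonZeroDivisors.ne_zero hD, ?_⟩
  ext i j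
  simpa using hB (i, j)

lemma Matrix.sq_sub_trace_mul_add_det_eq_zero {R : Type*} [CommRing R] [IsDomain R]
    {M : Matrix (Fin 2) (Fin 2) R} {v : Fin 2 → R} {q : R} (hv : v ≠ 0) (h : M *ᵥ v = q • v) :
    q ^ 2 - M.trace * q + M.det = 0 := by
  have hdet : (scalar (Fin 2) q - M).det = 0 :=
    exists_mulVec_eq_zero_iff.mp ⟨v, hv, by simp [sub_mulVec, h]⟩
  rwa [← eval_charpoly, charpoly_fin_two, eval_add, eval_sub, eval_mul, eval_pow, eval_X, eval_C,
    eval_C] at hdet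

lemma Matrix.sq_eq_trace_smul_sub_det_smul {R : Type*} [CommRing R] [Nontrivial R]
    (M : Matrix (Fin 2) (Fin 2) R) :
    M ^ 2 = M.trace • M - M.det • (1 : Matrix (Fin 2) (Fin 2) R) := by
  have h := aeval_self_charpoly M
  rw [charpoly_fin_two] at h
  simp only [map_add, map_sub, map_mul, map_pow, aeval_X, aeval_C, Algebra.algebraMap_eq_smul_one,
    smul_one_mul] at h
  rw [← sub_eq_zero, ← h]
  abel

lemma Matrix.trace_pow_add_two_mul {R : Type*} [CommRing R] [Nontrivial R]
    (M N : Matrix (Fin 2) (Fin 2) R) (n : ℕ) :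
    (M ^ (n + 2) * N).trace = M.trace * (M ^ (n + 1) * N).trace - M.det * (M ^ n * N).trace := by
  rw [pow_add, sq_eq_trace_smul_sub_det_smul, pow_succ]
  simp only [mul_sub, sub_mul, Algebra.mul_smul_comm, Algebra.smul_mul_assoc, mul_one,
    Matrix.mul_assoc, trace_sub, trace_smul, smul_eq_mul]

lemma two_mul_abs_le_abs_mul_sub_of_abs_le {R : Type*} [CommRing R] [LinearOrder R]
    [IsStrictOrderedRing R] {T x y : R} (hT : 3 ≤ |T|) (hxy : |x| ≤ |y|) :
    2 * |y| ≤ |T * y - x| := by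
  have h := abs_sub_abs_le_abs_sub (T * y) x
  rw [abs_mul] at h
  nlinarith [mul_le_mul_of_nonneg_right hT (abs_nonneg y)]

namespace Int

variable {c : ℕ → ℤ} {T : ℤ}

lemma tendsto_abs_atTop_of_recurrence (hT : 3 ≤ |T|) (hrec : ∀ n, c (n + 2) = T * c (n + 1) - c n)
    {n₀ : ℕ} (hne : c (n₀ + 1) ≠ 0) (hle : |c n₀| ≤ |c (n₀ + 1)|) :
    Tendsto (fun n ↦ |c n|) atTop atTop := by
  have hgrowth : ∀ k, |c (n₀ + k)| ≤ |c (n₀ + k + 1)| ∧ 2 ^ k ≤ |c (n₀ + k + 1)| := by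
    intro k
    induction k with
    | zero => exact ⟨hle, by simpa using Int.one_le_abs hne⟩
    | succ k ih =>
      show |c (n₀ + k + 1)| ≤ |c (n₀ + k + 2)| ∧ 2 ^ (k + 1) ≤ |c (n₀ + k + 2)|
      have hdouble : 2 * |c (n₀ + k + 1)| ≤ |c (n₀ + k + 2)| := by
        rw [hrec]
        exact two_mul_abs_le_abs_mul_sub_of_abs_le hT ih.1
      constructor
      · linarith [abs_nonneg (c (n₀ + k + 1))]
      · rw [pow_succ]
        linarith [ih.2]
  rw [← tendsto_add_atTop_iff_nat (n₀ + 1)]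
  refine tendsto_atTop_mono (fun k ↦ ?_) (tendsto_pow_atTop_atTop_of_one_lt one_lt_two)
  rw [show k + (n₀ + 1) = n₀ + k + 1 by ring]
  exact (hgrowth k).2

lemma eq_zero_of_recurrence (hrec : ∀ n, c (n + 2) = T * c (n + 1) - c n)
    (hdesc : ∀ n, c (n + 1) ≠ 0 → |c (n + 1)| < |c n|) (n : ℕ) : c n = 0 := by
  induction h : (c n).natAbs using Nat.strong_induction_on generalizing n with
  | _ m ih =>
    by_contra hn
    have hsucc : c (n + 1) ≠ 0 := by
      intro h0
      have hn2 : c (n + 2) = -c n := by rw [hrec, h0]; ring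
      have := hdesc (n + 1) (by rw [hn2]; exact neg_ne_zero.mpr hn)
      rw [hn2, h0, abs_zero] at this
      exact (abs_nonneg _).not_gt this
    have hlt := hdesc n hsucc
    exact hsucc (ih _ (by zify; simpa [← h] using hlt) _ rfl)

theorem forall_eq_zero_or_tendsto_abs_atTop (hT : 3 ≤ |T|)
    (hrec : ∀ n, c (n + 2) = T * c (n + 1) - c n) :
    (∀ n, c n = 0) ∨ Tendsto (fun n ↦ |c n|) atTop atTop := by
  by_cases h : ∃ n, c (n + 1) ≠ 0 ∧ |c n| ≤ |c (n + 1)|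
  · obtain ⟨n₀, hne, hle⟩ := h
    exact .inr (tendsto_abs_atTop_of_recurrence hT hrec hne hle)
  · push Not at h
    exact .inl (eq_zero_of_recurrence hrec h)

end Int

namespace Rat

variable {q t : ℚ} {c D : ℤ}

lemma abs_le_of_sq_sub_mul_add_one_eq_zero (hD : D ≠ 0) (hc : (c : ℚ) = D * t)
    (h : q ^ 2 - t * q + 1 = 0) : |q| ≤ |D| := by
  have hbq : (q.num : ℚ) = q * q.den := (mul_den_eq_num q).symm
  have hint : D * q.num ^ 2 - c * q.num * q.den + D * q.den ^ 2 = 0 := by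
    -- the left side is `D b² (q² - t q + 1)` once `a = q b` and `c = D t` are substituted
    have : (D * q.num ^ 2 - c * q.num * q.den + D * q.den ^ 2 : ℚ) = 0 := by
      linear_combination ((D : ℚ) * q.den ^ 2) * h
        + (D * (q.num + q * q.den) - D * t * q.den) * hbq - ((q.num : ℚ) * q.den) * hc
    exact_mod_cast this
  have hnum : q.num ∣ D := by
    refine ((isCoprime_num_den q).pow_right (n := 2)).dvd_of_dvd_mul_right
      ⟨c * q.den - D * q.num, ?_⟩
    linear_combination hint
  have hnumD : |(q.num : ℚ)| ≤ |D| := by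
    exact_mod_cast Int.le_of_dvd (abs_pos.mpr hD) ((abs_dvd_abs _ _).mpr hnum)
  have hden : (1 : ℚ) ≤ q.den := by exact_mod_cast q.den_pos
  calc |q| ≤ |q| * q.den := le_mul_of_one_le_right (abs_nonneg q) hden
    _ = |(q.num : ℚ)| := by rw [hbq, abs_mul, abs_of_pos (by positivity : (0 : ℚ) < q.den)]
    _ ≤ |D| := hnumD

lemma abs_le_two_mul_sq_of_sq_sub_mul_add_one_eq_zero (hD : D ≠ 0) (hc : (c : ℚ) = D * t)
    (h : q ^ 2 - t * q + 1 = 0) : |c| ≤ 2 * D ^ 2 := by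
  have hq : q ≠ 0 := by rintro rfl; norm_num at h
  have ht : t = q + q⁻¹ := by field_simp; linear_combination -h
  have hinv : q⁻¹ ^ 2 - t * q⁻¹ + 1 = 0 := by rw [ht]; field_simp; ring
  have hq_le := abs_le_of_sq_sub_mul_add_one_eq_zero hD hc h
  have hinv_le := abs_le_of_sq_sub_mul_add_one_eq_zero hD hc hinv
  have : |(c : ℚ)| ≤ 2 * D ^ 2 := by
    calc |(c : ℚ)| = |(D : ℚ)| * |q + q⁻¹| := by rw [hc, abs_mul, ht]
      _ ≤ |(D : ℚ)| * (|(D : ℚ)| + |(D : ℚ)|) := by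
          gcongr
          exact (abs_add_le q q⁻¹).trans
            (add_le_add (by exact_mod_cast hq_le) (by exact_mod_cast hinv_le))
      _ = 2 * D ^ 2 := by rw [← sq_abs (D : ℚ)]; ring
  exact_mod_cast this

end Rat

/-- Let `J ∈ SL₂(ℤ)` be hyperbolic (`|trace J| > 2`) and `K ∈ SL₂(ℚ)`. Then there is
an `N` such that for all `n ≥ N` the matrix `Jⁿ K` has no eigenvector with rational
entries. -/
theorem stmt6 (J : Matrix (Fin 2) (Fin 2) ℤ) (hJdet : J.det = 1) (hJtr : 2 < |J.trace|)
    (K : Matrix (Fin 2) (Fin 2) ℚ) (hKdet : K.det = 1) :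
    ∃ N : ℕ, ∀ n ≥ N,
      ¬ ∃ (v : Fin 2 → ℚ) (q : ℚ), v ≠ 0 ∧
        ((J.map (Int.cast : ℤ → ℚ)) ^ n * K).mulVec v = q • v := by
  obtain ⟨D, K', hD, hK'⟩ := K.exists_intCast_map_eq_smul
  set c : ℕ → ℤ := fun n ↦ (J ^ n * K').trace
  have hc (n : ℕ) : (c n : ℚ) = D * ((J.map (Int.cast : ℤ → ℚ)) ^ n * K).trace := by
    have := AddMonoidHom.map_trace (Int.castRingHom ℚ) (J ^ n * K')
    rwa [Matrix.map_mul, Matrix.map_pow, Int.coe_castRingHom, hK', Matrix.mul_smul, trace_smul,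
      smul_eq_mul] at this
  have hrec (n : ℕ) : c (n + 2) = J.trace * c (n + 1) - c n := by
    simpa only [hJdet, one_mul] using J.trace_pow_add_two_mul K' n
  have hgrowth : ∀ᶠ n in atTop, c n = 0 ∨ 2 * D ^ 2 < |c n| := by
    rcases Int.forall_eq_zero_or_tendsto_abs_atTop (by omega) hrec with hzero | htend
    · exact .of_forall fun n ↦ .inl (hzero n)
    · exact (htend.eventually_gt_atTop _).mono fun n ↦ .inr
  obtain ⟨N, hN⟩ := eventually_atTop.mp hgrowth
  refine ⟨N, fun n hn ⟨v, q, hv, hq⟩ ↦ ?_⟩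
  have hroot := sq_sub_trace_mul_add_det_eq_zero hv hq
  rw [det_mul, det_pow, ← Int.cast_det, hJdet, hKdet, Int.cast_one, one_pow, one_mul] at hroot
  rcases hN n hn with hzero | hlarge
  · have htr : ((J.map (Int.cast : ℤ → ℚ)) ^ n * K).trace = 0 := by
      simpa [hzero, hD] using (hc n).symm
    rw [htr] at hroot
    nlinarith [sq_nonneg q]
  · exact hlarge.not_ge <|
      Rat.abs_le_two_mul_sq_of_sq_sub_mul_add_one_eq_zero hD (hc n) hroot
end
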